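/- Let π be a guessing order and a a position with a + 2 ≤ B ≤ n such that the guesses at positions a and a+1 form an inversion, i.e., p(π(a+1))·k(π(a)) ≥ p(π(a))·k(π(a+1)). Let π' be obtained from π by transposing positions a and a+1. Then U(π', B) ≥ U(π, B). -/

import Mathlib

open Finset

/-- Success probability λ(π,B): sum of probabilities of the first B guesses. -/
noncomputable def lam (n : ℕ) (p : Fin n → ℝ) (π : Equiv.Perm (Fin n)) (B : ℕ) : ℝ :=
  ∑ t : Fin n, if t.val < B then p (π t) else 0

/-- Attacker utility U(π,B) = v·λ(π,B) − Σ_{t<B} k(π(t))·(1 − λ(π,t)). -/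
noncomputable def U (n : ℕ) (p k : Fin n → ℝ) (v : ℝ) (π : Equiv.Perm (Fin n)) (B : ℕ) : ℝ :=
  v * lam n p π B - ∑ t : Fin n, if t.val < B then k (π t) * (1 - lam n p π t.val) else 0

/-!
Transposing the adjacent guesses at positions `a` and `a + 1` does not change which passwords
are guessed within the budget, so `λ(π, B)` is unchanged; it changes the expected hashing cost
only in the two terms at `a` and `a + 1`, by `p(π a)·k(π (a+1)) − p(π (a+1))·k(π a)`, which is
nonpositive exactly at an inversion.
-/

noncomputable def expectedCost (n : ℕ) (p k : Fin n → ℝ) (π : Equiv.Perm (Fin n)) (B : ℕ) : ℝ :=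
  ∑ t : Fin n, if t.val < B then k (π t) * (1 - lam n p π t.val) else 0

section

variable {n : ℕ} (p : Fin n → ℝ) (π : Equiv.Perm (Fin n))

theorem U_eq_sub_expectedCost (k : Fin n → ℝ) (v : ℝ) (B : ℕ) :
    U n p k v π B = v * lam n p π B - expectedCost n p k π B := rfl

theorem lam_succ (t : Fin n) : lam n p π (t.val + 1) = lam n p π t.val + p (π t) := by
  have split : ∀ s : Fin n, (if s.val < t.val + 1 then p (π s) else 0) =
      (if s.val < t.val then p (π s) else 0) + (if t = s then p (π s) else 0) := by
    intro s
    rcases lt_trichotomy s.val t.val with h | h | h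
    · simp [h, Nat.lt_succ_of_lt h, (Fin.ne_of_lt h).symm]
    · simp [Fin.ext h]
    · simp [h.not_gt, Nat.not_lt.mpr (Nat.succ_le_of_lt h), (Fin.ne_of_lt h)]
  simp only [lam, split, sum_add_distrib, sum_ite_eq, mem_univ, if_true]

theorem lam_mul_swap {i j : Fin n} {t : ℕ} (h : i.val < t ↔ j.val < t) :
    lam n p (π * Equiv.swap i j) t = lam n p π t := by
  have swap_lt_iff : ∀ s : Fin n, (Equiv.swap i j s).val < t ↔ s.val < t := by
    intro s
    rw [Equiv.swap_apply_def]
    split_ifs with hi hj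
    · rw [hi]; exact h.symm
    · rw [hj]; exact h
    · rfl
  unfold lam
  rw [← Equiv.sum_comp (Equiv.swap i j) fun s : Fin n => if s.val < t then p (π s) else 0]
  simp only [Equiv.Perm.mul_apply, swap_lt_iff]

theorem expectedCost_mul_swap_succ (k : Fin n → ℝ) {B : ℕ} (a a' : Fin n)
    (ha' : a'.val = a.val + 1) (hB : a'.val < B) :
    expectedCost n p k (π * Equiv.swap a a') B - expectedCost n p k π B =
      p (π a) * k (π a') - p (π a') * k (π a) := by
  set σ := Equiv.swap a a'
  have hne : a ≠ a' := fun h => by rw [h] at ha'; omega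
  have lam_at : ∀ s : Fin n, s ≠ a' → lam n p (π * σ) s.val = lam n p π s.val := fun s hs =>
    lam_mul_swap p π (by have := Fin.val_ne_of_ne hs; omega)
  have lam_at_succ : lam n p (π * σ) (a.val + 1) = lam n p π a.val + p (π a') := by
    rw [lam_succ, lam_at a hne]
    simp [σ]
  rw [ha'] at hB
  unfold expectedCost
  rw [← sum_sub_distrib, sum_eq_add_of_mem a a' (mem_univ _) (mem_univ _) hne]
  · simp only [Equiv.Perm.mul_apply, σ, Equiv.swap_apply_left, Equiv.swap_apply_right,
      ha', if_pos hB, if_pos (Nat.lt_of_succ_lt hB), lam_at a hne, lam_at_succ, lam_succ]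
    ring
  · rintro s - ⟨hsa, hsa'⟩
    simp [σ, Equiv.swap_apply_of_ne_of_ne hsa hsa', lam_at s hsa']

end

theorem stmt_3 (n : ℕ) (p k : Fin n → ℝ) (v : ℝ)
    (π : Equiv.Perm (Fin n)) (B : ℕ) (hB : B ≤ n)
    (a : Fin n) (ha : a.val + 2 ≤ B)
    (hinv : p (π ⟨a.val + 1, by omega⟩) * k (π a) ≥ p (π a) * k (π ⟨a.val + 1, by omega⟩)) :
    U n p k v (π * Equiv.swap a ⟨a.val + 1, by omega⟩) B ≥ U n p k v π B := by
  have hlam : lam n p (π * Equiv.swap a ⟨a.val + 1, by omega⟩) B = lam n p π B :=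
    lam_mul_swap p π (by simp only; omega)
  have hcost :=
    expectedCost_mul_swap_succ p π k (B := B) a ⟨a.val + 1, by omega⟩ rfl (by simp only; omega)
  rw [U_eq_sub_expectedCost, U_eq_sub_expectedCost, hlam]
  linarith
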